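/- arXiv:1106.5010 — 2 statements merged into one kernel-verified Lean document; each statement's English description precedes it below -/
import Mathlib

section
/- Let μ : C → D and ν : D → C be modelization functors between J-categories, and let p : E → B be a morphism in C such that ν(μ(p)) is weakly equivalent to p. Then secat(μ(p)) = secat(p). -/
open CategoryTheory CategoryTheory.Limits ZeroObject

universe v u v' u'

variable (C : Type u) [Category.{v} C] [HasZeroObject C] [HasZeroMorphisms C]

/-- A category satisfying axioms (J1)-(J4) of Doeraene's J-categories:
a pointed category with fibrations, cofibrations and weak equivalences. -/
structure PreJCat where
  fib : MorphismProperty C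
  cofib : MorphismProperty C
  weq : MorphismProperty C
  /-- (J1) isomorphisms are trivial cofibrations -/
  iso_triv_cofib : ∀ {X Y : C} (f : X ⟶ Y), IsIso f → cofib f ∧ weq f
  /-- (J1) isomorphisms are trivial fibrations -/
  iso_triv_fib : ∀ {X Y : C} (f : X ⟶ Y), IsIso f → fib f ∧ weq f
  fib_comp : ∀ {X Y Z : C} {f : X ⟶ Y} {g : Y ⟶ Z}, fib f → fib g → fib (f ≫ g)
  cofib_comp : ∀ {X Y Z : C} {f : X ⟶ Y} {g : Y ⟶ Z}, cofib f → cofib g → cofib (f ≫ g)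
  /-- (J1) two-out-of-three for weak equivalences -/
  weq_comp : ∀ {X Y Z : C} {f : X ⟶ Y} {g : Y ⟶ Z}, weq f → weq g → weq (f ≫ g)
  weq_of_comp_left : ∀ {X Y Z : C} {f : X ⟶ Y} {g : Y ⟶ Z}, weq g → weq (f ≫ g) → weq f
  weq_of_comp_right : ∀ {X Y Z : C} {f : X ⟶ Y} {g : Y ⟶ Z}, weq f → weq (f ≫ g) → weq g
  /-- (J2) pullbacks of fibrations exist, and the base extension is a fibration -/
  pb_exists : ∀ {E B B' : C} (p : E ⟶ B) (f : B' ⟶ B), fib p →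
    ∃ (P : C) (fb : P ⟶ E) (pb : P ⟶ B'), IsPullback fb pb p f ∧ fib pb
  /-- (J2) base extensions of weak equivalences along fibrations are weak equivalences -/
  pb_weq : ∀ {E B B' P : C} {p : E ⟶ B} {f : B' ⟶ B} {fb : P ⟶ E} {pb : P ⟶ B'},
    fib p → IsPullback fb pb p f → (weq f → weq fb) ∧ (weq p → weq pb)
  /-- (J2) dual: pushouts of cofibrations exist -/
  po_exists : ∀ {A X Y : C} (i : A ⟶ X) (g : A ⟶ Y), cofib i →
    ∃ (Q : C) (inl : X ⟶ Q) (inr : Y ⟶ Q), IsPushout i g inl inr ∧ cofib inr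
  po_weq : ∀ {A X Y Q : C} {i : A ⟶ X} {g : A ⟶ Y} {inl : X ⟶ Q} {inr : Y ⟶ Q},
    cofib i → IsPushout i g inl inr → (weq g → weq inl) ∧ (weq i → weq inr)
  /-- (J3) F-factorizations exist -/
  F_fac : ∀ {X Y : C} (f : X ⟶ Y), ∃ (Z : C) (τ : X ⟶ Z) (q : Z ⟶ Y),
    weq τ ∧ fib q ∧ τ ≫ q = f
  /-- (J3) C-factorizations exist -/
  C_fac : ∀ {X Y : C} (f : X ⟶ Y), ∃ (Z : C) (i : X ⟶ Z) (σ : Z ⟶ Y),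
    cofib i ∧ weq σ ∧ i ≫ σ = f
  /-- (J4) cofibrant replacements exist -/
  cof_replace : ∀ X : C, ∃ (Xb : C) (q : Xb ⟶ X), fib q ∧ weq q ∧
    (∀ {E : C} (p : E ⟶ Xb), fib p → weq p → ∃ s : Xb ⟶ E, s ≫ p = 𝟙 Xb)

variable {C}

namespace PreJCat

/-- An object is a cofibrant model if every trivial fibration onto it admits a section. -/
def CofModel (P : PreJCat C) (X : C) : Prop :=
  ∀ {E : C} (p : E ⟶ X), P.fib p → P.weq p → ∃ s : X ⟶ E, s ≫ p = 𝟙 X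

/-- An object is e-fibrant if the morphism to the zero object is a fibration. -/
def EFibrant (P : PreJCat C) (X : C) : Prop := P.fib (0 : X ⟶ 0)

/-- `f` admits a weak lifting along `g` (all objects being cofibrant models). -/
def WeakLifting (P : PreJCat C) {A B Cc : C} (f : A ⟶ B) (g : Cc ⟶ B) : Prop :=
  ∃ (E : C) (τ : Cc ⟶ E) (q : E ⟶ B), P.weq τ ∧ P.fib q ∧ τ ≫ q = g ∧
    ∃ s : A ⟶ E, s ≫ q = f

/-- `g` admits a weak section. -/
def HasWeakSection (P : PreJCat C) {E B : C} (g : E ⟶ B) : Prop :=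
  P.WeakLifting (𝟙 B) g

/-- `j : J ⟶ B` is a join morphism of `f : A ⟶ B` and `g : Cc ⟶ B`: built from an
F-factorization of `g`, a pullback, a C-factorization and a pushout. -/
def IsJoin (P : PreJCat C) {A Cc B J : C} (f : A ⟶ B) (g : Cc ⟶ B) (j : J ⟶ B) : Prop :=
  ∃ (E : C) (τ : Cc ⟶ E) (q : E ⟶ B), P.weq τ ∧ P.fib q ∧ τ ≫ q = g ∧
  ∃ (E' Z : C) (fbar : E' ⟶ E) (pbar : E' ⟶ A) (i : E' ⟶ Z) (σ : Z ⟶ E)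
    (a : A ⟶ J) (bz : Z ⟶ J),
    IsPullback fbar pbar q f ∧ P.cofib i ∧ P.weq σ ∧ i ≫ σ = fbar ∧
    IsPushout pbar i a bz ∧ a ≫ j = f ∧ bz ≫ j = σ ≫ q

/-- `IsIterJoin P p n h` : `h` is an `n`-th iterated join morphism `*ⁿ_B E ⟶ B` of `p`. -/
inductive IsIterJoin (P : PreJCat C) {E B : C} (p : E ⟶ B) : ℕ → ∀ {X : C}, (X ⟶ B) → Prop
  | zero : IsIterJoin P p 0 p
  | succ {n : ℕ} {X Y : C} {h : X ⟶ B} {h' : Y ⟶ B} :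
      IsIterJoin P p n h → P.IsJoin h p h' → IsIterJoin P p (n + 1) h'

/-- The Ganea-type sectional category of a morphism. -/
noncomputable def Gsecat (P : PreJCat C) {E B : C} (p : E ⟶ B) : ℕ∞ :=
  sInf {n : ℕ∞ | ∃ m : ℕ, n = (m : ℕ∞) ∧
    ∃ (X : C) (h : X ⟶ B), P.IsIterJoin p m h ∧ P.HasWeakSection h}

end PreJCat

/-- `p1, p2` exhibit `Pd` as a binary product of `X` and `Y`. -/
def IsBinProd {X Y Pd : C} (p1 : Pd ⟶ X) (p2 : Pd ⟶ Y) : Prop :=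
  Nonempty (IsLimit (BinaryFan.mk p1 p2))

namespace PreJCat

/-- `IsFatWedge P p n j Δ` : `j : Tⁿ(p) ⟶ B^{n+1}` is an `n`-th fat wedge morphism of `p`
together with the diagonal `Δ : B ⟶ B^{n+1}`. -/
inductive IsFatWedge (P : PreJCat C) {E B : C} (p : E ⟶ B) :
    ℕ → ∀ {T Pw : C}, (T ⟶ Pw) → (B ⟶ Pw) → Prop
  | zero : IsFatWedge P p 0 p (𝟙 B)
  | succ {n : ℕ} {T Pn : C} {j : T ⟶ Pn} {Δ : B ⟶ Pn}
      (hprev : IsFatWedge P p n j Δ)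
      {Pn1 : C} {pr1 : Pn1 ⟶ Pn} {pr2 : Pn1 ⟶ B} (hP : IsBinProd pr1 pr2)
      {TB : C} {q1 : TB ⟶ T} {q2 : TB ⟶ B} (hTB : IsBinProd q1 q2)
      {PE : C} {r1 : PE ⟶ Pn} {r2 : PE ⟶ E} (hPE : IsBinProd r1 r2)
      {jB : TB ⟶ Pn1} (hjB : jB ≫ pr1 = q1 ≫ j ∧ jB ≫ pr2 = q2)
      {pP : PE ⟶ Pn1} (hpP : pP ≫ pr1 = r1 ∧ pP ≫ pr2 = r2 ≫ p)
      {Tn1 : C} {j' : Tn1 ⟶ Pn1} (hjoin : P.IsJoin jB pP j')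
      {Δ' : B ⟶ Pn1} (hΔ : Δ' ≫ pr1 = Δ ∧ Δ' ≫ pr2 = 𝟙 B) :
      IsFatWedge P p (n + 1) j' Δ'

/-- The Whitehead-type sectional category of a morphism with e-fibrant codomain. -/
noncomputable def WsecatE (P : PreJCat C) {E B : C} (p : E ⟶ B) : ℕ∞ :=
  sInf {n : ℕ∞ | ∃ m : ℕ, n = (m : ℕ∞) ∧
    ∃ (T Pw : C) (j : T ⟶ Pw) (Δ : B ⟶ Pw), P.IsFatWedge p m j Δ ∧ P.WeakLifting Δ j}

/-- The Whitehead-type sectional category of an arbitrary morphism, via e-fibrant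
replacements of the codomain. -/
noncomputable def Wsecat (P : PreJCat C) {E B : C} (p : E ⟶ B) : ℕ∞ :=
  ⨅ (F : C) (τ : B ⟶ F) (_ : P.weq τ ∧ P.EFibrant F), P.WsecatE (p ≫ τ)

/-- A commutative square is a homotopy pullback. -/
def IsHPB (P : PreJCat C) {D A Cc B : C} (f' : D ⟶ Cc) (g' : D ⟶ A)
    (g : Cc ⟶ B) (f : A ⟶ B) : Prop :=
  f' ≫ g = g' ≫ f ∧ ∃ (E : C) (τ : Cc ⟶ E) (q : E ⟶ B), P.weq τ ∧ P.fib q ∧ τ ≫ q = g ∧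
    ∃ (Pt : C) (pr1 : Pt ⟶ E) (pr2 : Pt ⟶ A), IsPullback pr1 pr2 q f ∧
      ∃ w : D ⟶ Pt, P.weq w ∧ w ≫ pr1 = f' ≫ τ ∧ w ≫ pr2 = g'

/-- A commutative square is a homotopy pushout. -/
def IsHPO (P : PreJCat C) {A B Cc D : C} (f : A ⟶ B) (g : A ⟶ Cc)
    (i' : B ⟶ D) (j' : Cc ⟶ D) : Prop :=
  f ≫ i' = g ≫ j' ∧ ∃ (Z : C) (i : A ⟶ Z) (σ : Z ⟶ B), P.cofib i ∧ P.weq σ ∧ i ≫ σ = f ∧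
    ∃ (Q : C) (inl : Z ⟶ Q) (inr : Cc ⟶ Q), IsPushout i g inl inr ∧
      ∃ w : Q ⟶ D, P.weq w ∧ inl ≫ w = σ ≫ i' ∧ inr ≫ w = j'

/-- `A-A'-B'-B` is a weak pullback over `b : B ⟶ B'` (all objects cofibrant models). -/
def IsWeakPullback (P : PreJCat C) {A B A' B' : C}
    (f : A ⟶ B) (f' : A' ⟶ B') (b : B ⟶ B') : Prop :=
  ∃ (X : C) (τ : A' ⟶ X) (q : X ⟶ B'), P.weq τ ∧ P.fib q ∧ τ ≫ q = f' ∧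
    ∃ x : A ⟶ X, P.IsHPB x f q b

/-- `g : G ⟶ B` is an `n`-th Ganea map of `B`: the `n`-th iterated join of `0 ⟶ B`. -/
def IsGaneaMap (P : PreJCat C) (B : C) (n : ℕ) {G : C} (g : G ⟶ B) : Prop :=
  P.IsIterJoin (0 : (0 : C) ⟶ B) n g

/-- The Lusternik-Schnirelmann category of an object. -/
noncomputable def catObj (P : PreJCat C) (B : C) : ℕ∞ :=
  sInf {n : ℕ∞ | ∃ m : ℕ, n = (m : ℕ∞) ∧
    ∃ (G : C) (g : G ⟶ B), P.IsGaneaMap B m g ∧ P.HasWeakSection g}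

/-- The Lusternik-Schnirelmann category of a morphism `b : B ⟶ B'`:
least `n` such that `b` admits a weak lifting along the `n`-th Ganea map of `B'`. -/
noncomputable def catMor (P : PreJCat C) {B B' : C} (b : B ⟶ B') : ℕ∞ :=
  sInf {n : ℕ∞ | ∃ m : ℕ, n = (m : ℕ∞) ∧
    ∃ (G : C) (g : G ⟶ B'), P.IsGaneaMap B' m g ∧ P.WeakLifting b g}

/-- One step of a zigzag: a weak equivalence of morphisms in the arrow category. -/
def MorWeqStep (P : PreJCat C) (u v : Arrow C) : Prop :=
  ∃ h : u ⟶ v, P.weq h.left ∧ P.weq h.right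

/-- Two morphisms are weakly equivalent: joined by a finite zigzag of weak
equivalences of morphisms. -/
def WeaklyEquivMor (P : PreJCat C) (u v : Arrow C) : Prop :=
  Relation.EqvGen P.MorWeqStep u v

def ObjWeqStep (P : PreJCat C) (X Y : C) : Prop := ∃ f : X ⟶ Y, P.weq f

/-- Two objects are weakly equivalent: joined by a finite zigzag of weak equivalences. -/
def WeaklyEquivObj (P : PreJCat C) (X Y : C) : Prop :=
  Relation.EqvGen P.ObjWeqStep X Y

/-- The abstract topological complexity of an e-fibrant object:
the sectional category of the diagonal `B ⟶ B × B`. -/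
noncomputable def TCE (P : PreJCat C) (B : C) : ℕ∞ :=
  ⨅ (Pd : C) (p1 : Pd ⟶ B) (p2 : Pd ⟶ B) (_ : IsBinProd p1 p2)
    (Δ : B ⟶ Pd) (_ : Δ ≫ p1 = 𝟙 B ∧ Δ ≫ p2 = 𝟙 B), P.Gsecat Δ

/-- The abstract topological complexity of an arbitrary object, via e-fibrant
replacements. -/
noncomputable def TC (P : PreJCat C) (B : C) : ℕ∞ :=
  ⨅ (F : C) (τ : B ⟶ F) (_ : P.weq τ ∧ P.EFibrant F), P.TCE F

end PreJCat

variable (C)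

/-- A J-category: (J1)-(J4) together with the cube axiom (J5). -/
structure JCat extends PreJCat C where
  /-- (J5) the cube axiom: in a commutative cube whose bottom face is a homotopy
  pushout and whose vertical faces are homotopy pullbacks, the top face is a
  homotopy pushout. -/
  cube : ∀ {X00 X01 X10 X11 Y00 Y01 Y10 Y11 : C}
    {tf : X00 ⟶ X01} {tg : X00 ⟶ X10} {ti : X01 ⟶ X11} {tj : X10 ⟶ X11}
    {bf : Y00 ⟶ Y01} {bg : Y00 ⟶ Y10} {bi : Y01 ⟶ Y11} {bj : Y10 ⟶ Y11}
    {v00 : X00 ⟶ Y00} {v01 : X01 ⟶ Y01} {v10 : X10 ⟶ Y10} {v11 : X11 ⟶ Y11},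
    tf ≫ ti = tg ≫ tj →
    toPreJCat.IsHPO bf bg bi bj →
    toPreJCat.IsHPB tf v00 v01 bf →
    toPreJCat.IsHPB tg v00 v10 bg →
    toPreJCat.IsHPB ti v01 v11 bi →
    toPreJCat.IsHPB tj v10 v11 bj →
    toPreJCat.IsHPO tf tg ti tj

variable {C}

/-- A modelization functor: preserves weak equivalences, homotopy pullbacks and
homotopy pushouts. -/
structure ModelizationFunctor {D : Type u'} [Category.{v'} D] [HasZeroObject D]
    [HasZeroMorphisms D] (P : PreJCat C) (Q : PreJCat D) where
  F : C ⥤ D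
  map_weq : ∀ {X Y : C} (f : X ⟶ Y), P.weq f → Q.weq (F.map f)
  map_hpb : ∀ {Dd A Cc B : C} {f' : Dd ⟶ Cc} {g' : Dd ⟶ A} {g : Cc ⟶ B} {f : A ⟶ B},
    P.IsHPB f' g' g f → Q.IsHPB (F.map f') (F.map g') (F.map g) (F.map f)
  map_hpo : ∀ {A B Cc Dd : C} {f : A ⟶ B} {g : A ⟶ Cc} {i' : B ⟶ Dd} {j' : Cc ⟶ Dd},
    P.IsHPO f g i' j' → Q.IsHPO (F.map f) (F.map g) (F.map i') (F.map j')

/-!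
Each stage in the construction of a join (an F-factorization, a pullback along a fibration,
a C-factorization and a pushout along a cofibration) is homotopy invariant. Hence, when every
object is a cofibrant model, the `n`-th iterated join of `p` is determined up to a zigzag of
weak equivalences over the base, and the existence of a weak section is invariant under such
zigzags. So `Gsecat` only depends on the weak equivalence class of `p`. A modelization functor
sends a join to a homotopy pushout of a homotopy pullback, which is weakly equivalent to a join
of the images. This gives `Gsecat (μ p) ≤ Gsecat p`, and symmetrically
`Gsecat p = Gsecat (ν (μ p)) ≤ Gsecat (μ p)`.
-/

set_option linter.unusedSectionVars false

namespace PreJCat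

variable {P : PreJCat C}

lemma weq_id (P : PreJCat C) (X : C) : P.weq (𝟙 X) := (P.iso_triv_fib _ inferInstance).2

lemma weq_of_comp_eq_id {X Y : C} {s : X ⟶ Y} {t : Y ⟶ X} (hst : s ≫ t = 𝟙 X)
    (ht : P.weq t) : P.weq s :=
  P.weq_of_comp_left ht (hst ▸ P.weq_id X)

lemma fib_of_isPullback {E B A Pt : C} {q : E ⟶ B} {f : A ⟶ B} {fb : Pt ⟶ E} {pb : Pt ⟶ A}
    (hq : P.fib q) (h : IsPullback fb pb q f) : P.fib pb := by
  obtain ⟨P₀, fb₀, pb₀, h₀, hpb₀⟩ := P.pb_exists q f hq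
  rw [← h.isoIsPullback_hom_snd _ _ h₀]
  exact P.fib_comp (P.iso_triv_fib _ inferInstance).1 hpb₀

lemma cofib_of_isPushout {A X Y Q : C} {i : A ⟶ X} {g : A ⟶ Y} {inl : X ⟶ Q} {inr : Y ⟶ Q}
    (hi : P.cofib i) (h : IsPushout i g inl inr) : P.cofib inr := by
  obtain ⟨Q₀, inl₀, inr₀, h₀, hinr₀⟩ := P.po_exists i g hi
  rw [← h₀.inr_isoIsPushout_hom _ _ h]
  exact P.cofib_comp hinr₀ (P.iso_triv_cofib _ inferInstance).1

def WeqOver (P : PreJCat C) {B : C} (u v : Over B) : Prop :=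
  ∃ e : u ⟶ v, P.weq e.left

def WeaklyEquivOver (P : PreJCat C) {B : C} : Over B → Over B → Prop :=
  Relation.EqvGen P.WeqOver

lemma WeaklyEquivOver.refl {B : C} (u : Over B) : P.WeaklyEquivOver u u :=
  Relation.EqvGen.refl u

lemma WeaklyEquivOver.symm {B : C} {u v : Over B} (h : P.WeaklyEquivOver u v) :
    P.WeaklyEquivOver v u :=
  Relation.EqvGen.symm _ _ h

lemma WeaklyEquivOver.trans {B : C} {u v w : Over B} (h : P.WeaklyEquivOver u v)
    (h' : P.WeaklyEquivOver v w) : P.WeaklyEquivOver u w :=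
  Relation.EqvGen.trans _ _ _ h h'

lemma weaklyEquivOver_of_weq {B X Y : C} {j : X ⟶ B} {j' : Y ⟶ B} {e : X ⟶ Y}
    (he : P.weq e) (hej : e ≫ j' = j) : P.WeaklyEquivOver (Over.mk j) (Over.mk j') :=
  Relation.EqvGen.rel _ _ ⟨Over.homMk e hej, he⟩

lemma exists_weq_comp_eq_of_fibrantReplacement (hc : ∀ X : C, P.CofModel X)
    {X X' B B' E E₁ : C} {g : X ⟶ B} {g' : X' ⟶ B'} {α : X ⟶ X'} {β : B ⟶ B'}
    (hα : P.weq α) (hg : g ≫ β = α ≫ g')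
    {τ : X ⟶ E} {q : E ⟶ B} (hτ : P.weq τ) (hfac : τ ≫ q = g)
    {τ₁ : X' ⟶ E₁} {q₁ : E₁ ⟶ B'} (hτ₁ : P.weq τ₁) (hq₁ : P.fib q₁) (hfac₁ : τ₁ ≫ q₁ = g') :
    ∃ e : E ⟶ E₁, P.weq e ∧ e ≫ q₁ = q ≫ β := by
  -- `e` is read off a section of a trivial fibration onto the cofibrant model `E`.
  obtain ⟨W, w₁, wE, hW, hwE⟩ := P.pb_exists q₁ (q ≫ β) hq₁
  obtain ⟨V, m₁, m₂, hm₁, hm₂, hm⟩ := P.F_fac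
    (hW.lift (α ≫ τ₁) τ (by rw [Category.assoc, hfac₁, ← hg, ← hfac, Category.assoc]))
  have ht : P.weq (m₂ ≫ wE) :=
    P.weq_of_comp_right hm₁ (by rw [← Category.assoc, hm, hW.lift_snd]; exact hτ)
  obtain ⟨s, hs⟩ := hc E _ (P.fib_comp hm₂ hwE) ht
  refine ⟨s ≫ m₂ ≫ w₁, P.weq_comp (weq_of_comp_eq_id hs ht) (P.weq_of_comp_right hm₁ ?_), ?_⟩
  · rw [← Category.assoc, hm, hW.lift_fst]
    exact P.weq_comp hα hτ₁
  · calc (s ≫ m₂ ≫ w₁) ≫ q₁ = (s ≫ m₂ ≫ wE) ≫ q ≫ β := by simp [hW.w]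
      _ = q ≫ β := by rw [hs, Category.id_comp]

lemma exists_section_of_comp_eq_weq (hc : ∀ X : C, P.CofModel X) {E B B' : C}
    {q : E ⟶ B'} (hq : P.fib q) {t : B ⟶ E} {β : B ⟶ B'} (hβ : P.weq β) (ht : t ≫ q = β) :
    ∃ s : B' ⟶ E, s ≫ q = 𝟙 B' := by
  obtain ⟨V, n₁, n₂, hn₁, hn₂, hn⟩ := P.F_fac t
  obtain ⟨s, hs⟩ := hc B' (n₂ ≫ q) (P.fib_comp hn₂ hq)
    (P.weq_of_comp_right hn₁ (by rw [← Category.assoc, hn, ht]; exact hβ))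
  exact ⟨s ≫ n₂, by rw [Category.assoc, hs]⟩

lemma hasWeakSection_iff_of_weq (hc : ∀ X : C, P.CofModel X) {X X' B B' : C}
    {h : X ⟶ B} {h' : X' ⟶ B'} {γ : X ⟶ X'} {β : B ⟶ B'} (hγ : P.weq γ) (hβ : P.weq β)
    (hh : h ≫ β = γ ≫ h') : P.HasWeakSection h ↔ P.HasWeakSection h' := by
  constructor
  · rintro ⟨E, τ, q, hτ, -, hfac, s, hs⟩
    obtain ⟨E₁, τ₁, q₁, hτ₁, hq₁, hfac₁⟩ := P.F_fac h'
    obtain ⟨e, -, he⟩ :=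
      exists_weq_comp_eq_of_fibrantReplacement hc hγ hh hτ hfac hτ₁ hq₁ hfac₁
    obtain ⟨s₁, hs₁⟩ := exists_section_of_comp_eq_weq hc hq₁ hβ (t := s ≫ e)
      (by rw [Category.assoc, he, ← Category.assoc, hs, Category.id_comp])
    exact ⟨E₁, τ₁, q₁, hτ₁, hq₁, hfac₁, s₁, hs₁⟩
  · rintro ⟨E₁, τ₁, q₁, hτ₁, hq₁, hfac₁, s₁, hs₁⟩
    obtain ⟨E, e, q, hE, hq⟩ := P.pb_exists q₁ β hq₁
    refine ⟨E, hE.lift (γ ≫ τ₁) h (by rw [Category.assoc, hfac₁, ← hh]), q, ?_, hq,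
      hE.lift_snd _ _ _, hE.lift (β ≫ s₁) (𝟙 B) (by simp [hs₁]), hE.lift_snd _ _ _⟩
    exact P.weq_of_comp_left ((P.pb_weq hq₁ hE).1 hβ)
      (by rw [hE.lift_fst]; exact P.weq_comp hγ hτ₁)

lemma hasWeakSection_iff_of_weaklyEquivOver (hc : ∀ X : C, P.CofModel X) {B : C}
    {u v : Over B} (huv : P.WeaklyEquivOver u v) :
    P.HasWeakSection u.hom ↔ P.HasWeakSection v.hom := by
  induction huv with
  | rel u v huv =>
    obtain ⟨e, he⟩ := huv
    exact hasWeakSection_iff_of_weq hc he (P.weq_id B) (by simp)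
  | refl => rfl
  | symm _ _ _ ih => exact ih.symm
  | trans _ _ _ _ _ ih₁ ih₂ => exact ih₁.trans ih₂

lemma weq_of_isPullback_of_trivialFibration {V E B A PV Pj : C} {t : V ⟶ E} {q : E ⟶ B}
    {h : A ⟶ B} (ht : P.fib t) (htw : P.weq t)
    {fb : Pj ⟶ E} {pb : Pj ⟶ A} (hPj : IsPullback fb pb q h)
    {v₁ : PV ⟶ V} {v₂ : PV ⟶ A} (hPV : IsPullback v₁ v₂ (t ≫ q) h)
    {θ : PV ⟶ Pj} (hθ₁ : θ ≫ fb = v₁ ≫ t) (hθ₂ : θ ≫ pb = v₂) : P.weq θ :=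
  (P.pb_weq ht (IsPullback.of_bot (by rwa [hθ₂]) hθ₁.symm hPj)).2 htw

/-- Ken Brown's factorization of a weak equivalence `w` between fibrations over `B`:
`w = m ≫ t₂` where `m` is a section of the trivial fibration `t₁`. -/
lemma exists_brownFactorization {E Et B : C} {q : E ⟶ B} {qt : Et ⟶ B} (hq : P.fib q)
    (hqt : P.fib qt) {w : E ⟶ Et} (hw : P.weq w) (hwq : w ≫ qt = q) :
    ∃ (V : C) (m : E ⟶ V) (t₁ : V ⟶ E) (t₂ : V ⟶ Et), P.fib t₁ ∧ P.weq t₁ ∧ P.fib t₂ ∧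
      P.weq t₂ ∧ t₂ ≫ qt = t₁ ≫ q ∧ m ≫ t₁ = 𝟙 E ∧ m ≫ t₂ = w := by
  obtain ⟨Z, z₁, z₂, hZ, hz₂⟩ := P.pb_exists qt q hqt
  obtain ⟨V, m, k, hm, hk, hmk⟩ := P.F_fac (hZ.lift w (𝟙 E) (by simp [hwq]))
  have hmt₁ : m ≫ k ≫ z₂ = 𝟙 E := by rw [← Category.assoc, hmk, hZ.lift_snd]
  have hmt₂ : m ≫ k ≫ z₁ = w := by rw [← Category.assoc, hmk, hZ.lift_fst]
  refine ⟨V, m, k ≫ z₂, k ≫ z₁, P.fib_comp hk hz₂,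
    P.weq_of_comp_right hm (hmt₁ ▸ P.weq_id E),
    P.fib_comp hk (fib_of_isPullback hq hZ.flip), P.weq_of_comp_right hm (hmt₂ ▸ hw),
    by simp [hZ.w], hmt₁, hmt₂⟩

lemma weq_of_isPullback_of_weq_over {E Et B A Pj Pt : C} {q : E ⟶ B} {qt : Et ⟶ B}
    (hq : P.fib q) (hqt : P.fib qt) {w : E ⟶ Et} (hw : P.weq w) (hwq : w ≫ qt = q)
    {h : A ⟶ B} {fb : Pj ⟶ E} {pb : Pj ⟶ A} (hPj : IsPullback fb pb q h)
    {ft : Pt ⟶ Et} {pt : Pt ⟶ A} (hPt : IsPullback ft pt qt h)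
    {u : Pj ⟶ Pt} (hu₁ : u ≫ ft = fb ≫ w) (hu₂ : u ≫ pt = pb) : P.weq u := by
  obtain ⟨V, m, t₁, t₂, ht₁, ht₁w, ht₂, ht₂w, ht, hmt₁, hmt₂⟩ :=
    exists_brownFactorization hq hqt hw hwq
  -- The base change of `w = m ≫ t₂` is `m' ≫ θt`, with `m'` a section of the base change `θ`
  -- of `t₁`; base changes of trivial fibrations are weak equivalences.
  obtain ⟨PV, v₁, v₂, hPV, -⟩ := P.pb_exists (t₁ ≫ q) h (P.fib_comp ht₁ hq)
  let m' : Pj ⟶ PV := hPV.lift (fb ≫ m) pb (by simp [reassoc_of% hmt₁, hPj.w])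
  let θ : PV ⟶ Pj := hPj.lift (v₁ ≫ t₁) v₂ (by simp [hPV.w])
  let θt : PV ⟶ Pt := hPt.lift (v₁ ≫ t₂) v₂ (by simp [ht, hPV.w])
  have hθ : P.weq θ := weq_of_isPullback_of_trivialFibration ht₁ ht₁w hPj hPV
    (hPj.lift_fst _ _ _) (hPj.lift_snd _ _ _)
  have hθt : P.weq θt := weq_of_isPullback_of_trivialFibration ht₂ ht₂w hPt (ht ▸ hPV)
    (hPt.lift_fst _ _ _) (hPt.lift_snd _ _ _)
  have hm'θ : m' ≫ θ = 𝟙 Pj :=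
    hPj.hom_ext (by simp [m', θ, hmt₁]) (by simp [m', θ])
  have hu : u = m' ≫ θt :=
    hPt.hom_ext (by simp [m', θt, hu₁, hmt₂]) (by simp [m', θt, hu₂])
  rw [hu]
  exact P.weq_comp (weq_of_comp_eq_id hm'θ hθ) hθt

lemma weq_of_isPullback_of_weq {E B A E₁ B' A' Pj P₁ : C} {q : E ⟶ B} {h : A ⟶ B}
    {q₁ : E₁ ⟶ B'} {h' : A' ⟶ B'} (hq : P.fib q) (hq₁ : P.fib q₁)
    {e : E ⟶ E₁} {β : B ⟶ B'} {γ : A ⟶ A'} (he : P.weq e) (hβ : P.weq β) (hγ : P.weq γ)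
    (hqe : e ≫ q₁ = q ≫ β) (hh : h ≫ β = γ ≫ h')
    {fb : Pj ⟶ E} {pb : Pj ⟶ A} (hPj : IsPullback fb pb q h)
    {f₁ : P₁ ⟶ E₁} {pb₁ : P₁ ⟶ A'} (hP₁ : IsPullback f₁ pb₁ q₁ h')
    {u : Pj ⟶ P₁} (hu₁ : u ≫ f₁ = fb ≫ e) (hu₂ : u ≫ pb₁ = pb ≫ γ) : P.weq u := by
  -- Through the base change `Et` of `q₁` along `β`, `u` splits into a map over `B` and a base
  -- change of `γ` along the fibration `pb₁`.
  obtain ⟨Et, et, qt, hEt, hqt⟩ := P.pb_exists q₁ β hq₁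
  obtain ⟨Pt, ft, pt, hPt, -⟩ := P.pb_exists qt h hqt
  let w : E ⟶ Et := hEt.lift e q hqe
  have hw : P.weq w :=
    P.weq_of_comp_left ((P.pb_weq hq₁ hEt).1 hβ) (by rw [hEt.lift_fst]; exact he)
  let v : Pt ⟶ P₁ := hP₁.lift (ft ≫ et) (pt ≫ γ)
    (by rw [Category.assoc, hEt.w, reassoc_of% hPt.w, hh, Category.assoc])
  have hv : P.weq v := by
    have hsq : IsPullback v pt pb₁ γ := IsPullback.of_right
      (by rw [hP₁.lift_fst, ← hh]; exact hPt.paste_horiz hEt) (hP₁.lift_snd _ _ _) hP₁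
    exact (P.pb_weq (fib_of_isPullback hq₁ hP₁) hsq).1 hγ
  let u₀ : Pj ⟶ Pt := hPt.lift (fb ≫ w) pb (by simp [w, hPj.w])
  have hu₀ : P.weq u₀ := weq_of_isPullback_of_weq_over hq hqt hw (hEt.lift_snd _ _ _) hPj hPt
    (hPt.lift_fst _ _ _) (hPt.lift_snd _ _ _)
  have hu : u = u₀ ≫ v := hP₁.hom_ext (by simp [u₀, v, w, hu₁]) (by simp [u₀, v, hu₂])
  rw [hu]
  exact P.weq_comp hu₀ hv

lemma exists_weq_of_isPushout {E' Z A J E₁' A' : C} {pbar : E' ⟶ A} {i : E' ⟶ Z}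
    {a : A ⟶ J} {bz : Z ⟶ J} (hi : P.cofib i) (hJ : IsPushout pbar i a bz)
    {u : E' ⟶ E₁'} {γ : A ⟶ A'} (hu : P.weq u) (hγ : P.weq γ)
    {pbar' : E₁' ⟶ A'} (hpbar : u ≫ pbar' = pbar ≫ γ) :
    ∃ (Z' J' : C) (ζ : Z ⟶ Z') (i' : E₁' ⟶ Z') (a' : A' ⟶ J') (bz' : Z' ⟶ J') (δ : J ⟶ J'),
      P.cofib i' ∧ P.weq ζ ∧ IsPushout i u ζ i' ∧ IsPushout pbar' i' a' bz' ∧ P.weq δ ∧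
      a ≫ δ = γ ≫ a' ∧ bz ≫ δ = ζ ≫ bz' := by
  obtain ⟨Z', ζ, i', hZ', hi'⟩ := P.po_exists i u hi
  obtain ⟨J', bz', a', hJ', -⟩ := P.po_exists i' pbar' hi'
  let δ : J ⟶ J' := hJ.desc (γ ≫ a') (ζ ≫ bz')
    (by rw [← reassoc_of% hpbar, ← hJ'.w, reassoc_of% hZ'.w])
  have haδ : a ≫ δ = γ ≫ a' := hJ.inl_desc _ _ _
  have hbzδ : bz ≫ δ = ζ ≫ bz' := hJ.inr_desc _ _ _
  have hδ : IsPushout a γ δ a' := IsPushout.of_top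
    (by rw [← hpbar, hbzδ]; exact hZ'.paste_vert hJ') haδ hJ.flip
  exact ⟨Z', J', ζ, i', a', bz', δ, hi', (P.po_weq hi hZ').1 hu, hZ', hJ'.flip,
    (P.po_weq (cofib_of_isPushout hi hJ.flip) hδ).1 hγ, haδ, hbzδ⟩

/-- The second half of `IsJoin`: `j` is induced on a pushout of `pbar` along a cofibrant
replacement `i` of `fbar`, for a commutative square `fbar ≫ q = pbar ≫ f`. -/
def IsPushoutJoin (P : PreJCat C) {A E E' B J : C} (f : A ⟶ B) (q : E ⟶ B) (fbar : E' ⟶ E)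
    (pbar : E' ⟶ A) (j : J ⟶ B) : Prop :=
  ∃ (Z : C) (i : E' ⟶ Z) (σ : Z ⟶ E) (a : A ⟶ J) (bz : Z ⟶ J), P.cofib i ∧ P.weq σ ∧
    i ≫ σ = fbar ∧ IsPushout pbar i a bz ∧ a ≫ j = f ∧ bz ≫ j = σ ≫ q

lemma isJoin_iff {A Cc B J : C} {f : A ⟶ B} {g : Cc ⟶ B} {j : J ⟶ B} :
    P.IsJoin f g j ↔ ∃ (E : C) (τ : Cc ⟶ E) (q : E ⟶ B), P.weq τ ∧ P.fib q ∧ τ ≫ q = g ∧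
      ∃ (E' : C) (fbar : E' ⟶ E) (pbar : E' ⟶ A), IsPullback fbar pbar q f ∧
        P.IsPushoutJoin f q fbar pbar j := by
  constructor
  · rintro ⟨E, τ, q, hτ, hq, hg, E', Z, fbar, pbar, i, σ, a, bz, hE', hj⟩
    exact ⟨E, τ, q, hτ, hq, hg, E', fbar, pbar, hE', Z, i, σ, a, bz, hj⟩
  · rintro ⟨E, τ, q, hτ, hq, hg, E', fbar, pbar, hE', Z, i, σ, a, bz, hj⟩
    exact ⟨E, τ, q, hτ, hq, hg, E', Z, fbar, pbar, i, σ, a, bz, hE', hj⟩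

lemma exists_isPushoutJoin (P : PreJCat C) {A E E' B : C} {f : A ⟶ B} {q : E ⟶ B}
    {fbar : E' ⟶ E} {pbar : E' ⟶ A} (hw : fbar ≫ q = pbar ≫ f) :
    ∃ (J : C) (j : J ⟶ B), P.IsPushoutJoin f q fbar pbar j := by
  obtain ⟨Z, i, σ, hi, hσ, hiσ⟩ := P.C_fac fbar
  obtain ⟨J, bz, a, hJ, -⟩ := P.po_exists i pbar hi
  exact ⟨J, hJ.desc (σ ≫ q) f (by rw [← Category.assoc, hiσ, hw]), Z, i, σ, a, bz, hi, hσ,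
    hiσ, hJ.flip, hJ.inr_desc _ _ _, hJ.inl_desc _ _ _⟩

lemma exists_isJoin (P : PreJCat C) {A Cc B : C} (f : A ⟶ B) (g : Cc ⟶ B) :
    ∃ (J : C) (j : J ⟶ B), P.IsJoin f g j := by
  obtain ⟨E, τ, q, hτ, hq, hg⟩ := P.F_fac g
  obtain ⟨E', fbar, pbar, hE', -⟩ := P.pb_exists q f hq
  obtain ⟨J, j, hj⟩ := P.exists_isPushoutJoin hE'.w
  exact ⟨J, j, isJoin_iff.2 ⟨E, τ, q, hτ, hq, hg, E', fbar, pbar, hE', hj⟩⟩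

lemma IsPushoutJoin.exists_weq {A E E' B J A' E₁ E₁' B' : C} {f : A ⟶ B} {q : E ⟶ B}
    {fbar : E' ⟶ E} {pbar : E' ⟶ A} {j : J ⟶ B} (hj : P.IsPushoutJoin f q fbar pbar j)
    {f' : A' ⟶ B'} {q' : E₁ ⟶ B'} {fbar' : E₁' ⟶ E₁} {pbar' : E₁' ⟶ A'}
    (hw' : fbar' ≫ q' = pbar' ≫ f')
    {u : E' ⟶ E₁'} {γ : A ⟶ A'} {e : E ⟶ E₁} {β : B ⟶ B'}
    (hu : P.weq u) (hγ : P.weq γ) (he : P.weq e)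
    (hpbar : u ≫ pbar' = pbar ≫ γ) (hfbar : u ≫ fbar' = fbar ≫ e)
    (hf : f ≫ β = γ ≫ f') (hq : q ≫ β = e ≫ q') :
    ∃ (J' : C) (j' : J' ⟶ B') (δ : J ⟶ J'),
      P.IsPushoutJoin f' q' fbar' pbar' j' ∧ P.weq δ ∧ j ≫ β = δ ≫ j' := by
  obtain ⟨Z, i, σ, a, bz, hi, hσ, hiσ, hJ, haj, hbzj⟩ := hj
  obtain ⟨Z', J', ζ, i', a', bz', δ, hi', hζ, hZ', hJ', hδ, haδ, hbzδ⟩ :=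
    exists_weq_of_isPushout hi hJ hu hγ hpbar
  let σ' : Z' ⟶ E₁ := hZ'.desc (σ ≫ e) fbar' (by rw [reassoc_of% hiσ, hfbar])
  have hζσ' : ζ ≫ σ' = σ ≫ e := hZ'.inl_desc _ _ _
  have hi'σ' : i' ≫ σ' = fbar' := hZ'.inr_desc _ _ _
  let j' : J' ⟶ B' := hJ'.desc f' (σ' ≫ q') (by rw [reassoc_of% hi'σ', hw'])
  refine ⟨J', j', δ, ⟨Z', i', σ', a', bz', hi', ?_, hi'σ', hJ', hJ'.inl_desc _ _ _,
    hJ'.inr_desc _ _ _⟩, hδ, ?_⟩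
  · exact P.weq_of_comp_right hζ (by rw [hζσ']; exact P.weq_comp hσ he)
  · apply hJ.hom_ext
    · rw [reassoc_of% haj, reassoc_of% haδ, hJ'.inl_desc, hf]
    · rw [reassoc_of% hbzj, reassoc_of% hbzδ, hJ'.inr_desc, reassoc_of% hζσ', hq]

lemma weaklyEquivOver_of_isPushout_comp {A E E' B Z U J JU : C} {f : A ⟶ B} {q : E ⟶ B}
    {pbar : E' ⟶ A} {i : E' ⟶ Z} {σ : Z ⟶ E} {a : A ⟶ J} {bz : Z ⟶ J} {j : J ⟶ B}
    (hJ : IsPushout pbar i a bz) (haj : a ≫ j = f) (hbzj : bz ≫ j = σ ≫ q)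
    {k : Z ⟶ U} {σU : U ⟶ E} (hk : P.cofib k) (hkw : P.weq k) (hkσ : k ≫ σU = σ)
    {aU : A ⟶ JU} {bzU : U ⟶ JU} {jU : JU ⟶ B} (hJU : IsPushout pbar (i ≫ k) aU bzU)
    (hajU : aU ≫ jU = f) (hbzjU : bzU ≫ jU = σU ≫ q) :
    P.WeaklyEquivOver (Over.mk j) (Over.mk jU) := by
  let δ : J ⟶ JU := hJ.desc aU (k ≫ bzU) (by rw [hJU.w, Category.assoc])
  have haδ : a ≫ δ = aU := hJ.inl_desc _ _ _
  have hbzδ : bz ≫ δ = k ≫ bzU := hJ.inr_desc _ _ _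
  have hδ : IsPushout k bz bzU δ :=
    IsPushout.of_left (by rw [haδ]; exact hJU.flip) hbzδ.symm hJ.flip
  refine weaklyEquivOver_of_weq ((P.po_weq hk hδ).2 hkw) (hJ.hom_ext ?_ ?_)
  · rw [reassoc_of% haδ, hajU, haj]
  · rw [reassoc_of% hbzδ, hbzjU, reassoc_of% hkσ, hbzj]

lemma IsPushoutJoin.weaklyEquivOver {A E E' B J J' : C} {f : A ⟶ B} {q : E ⟶ B}
    {fbar : E' ⟶ E} {pbar : E' ⟶ A} (hw : fbar ≫ q = pbar ≫ f) {j : J ⟶ B} {j' : J' ⟶ B}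
    (hj : P.IsPushoutJoin f q fbar pbar j) (hj' : P.IsPushoutJoin f q fbar pbar j') :
    P.WeaklyEquivOver (Over.mk j) (Over.mk j') := by
  obtain ⟨Z, i, σ, a, bz, hi, hσ, hiσ, hJ, haj, hbzj⟩ := hj
  obtain ⟨Z', i', σ', a', bz', hi', hσ', hiσ', hJ', haj', hbzj'⟩ := hj'
  -- Both cofibrant replacements of `fbar` map by trivial cofibrations to a common one.
  obtain ⟨V, vl, vr, hV, hvr⟩ := P.po_exists i i' hi
  obtain ⟨U, k, σU, hk, hσU, hkσU⟩ := P.C_fac (hV.desc σ σ' (by rw [hiσ, hiσ']))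
  have hl : (vl ≫ k) ≫ σU = σ := by rw [Category.assoc, hkσU, hV.inl_desc]
  have hr : (vr ≫ k) ≫ σU = σ' := by rw [Category.assoc, hkσU, hV.inr_desc]
  have hlc : P.cofib (vl ≫ k) := P.cofib_comp (cofib_of_isPushout hi' hV.flip) hk
  have hiU : i ≫ vl ≫ k = i' ≫ vr ≫ k := by rw [reassoc_of% hV.w]
  obtain ⟨JU, bzU, aU, hJU, -⟩ := P.po_exists (i ≫ vl ≫ k) pbar (P.cofib_comp hi hlc)
  let jU : JU ⟶ B := hJU.desc (σU ≫ q) f (by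
    rw [Category.assoc, Category.assoc, reassoc_of% hkσU, hV.inl_desc_assoc, reassoc_of% hiσ, hw])
  have hajU : aU ≫ jU = f := hJU.inr_desc _ _ _
  have hbzjU : bzU ≫ jU = σU ≫ q := hJU.inl_desc _ _ _
  exact (weaklyEquivOver_of_isPushout_comp hJ haj hbzj hlc
      (P.weq_of_comp_left hσU (hl ▸ hσ)) hl hJU.flip hajU hbzjU).trans
    (weaklyEquivOver_of_isPushout_comp hJ' haj' hbzj' (P.cofib_comp hvr hk)
      (P.weq_of_comp_left hσU (hr ▸ hσ')) hr (hiU ▸ hJU.flip) hajU hbzjU).symm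

lemma IsJoin.exists_isPushoutJoin_weq (hc : ∀ X : C, P.CofModel X)
    {A Cc B J A' Cc' B' : C} {h : A ⟶ B} {g : Cc ⟶ B} {j : J ⟶ B} (hj : P.IsJoin h g j)
    {h' : A' ⟶ B'} {g' : Cc' ⟶ B'} {γ : A ⟶ A'} {α : Cc ⟶ Cc'} {β : B ⟶ B'}
    (hγ : P.weq γ) (hα : P.weq α) (hβ : P.weq β) (hh : h ≫ β = γ ≫ h') (hg : g ≫ β = α ≫ g')
    {E₁ : C} {τ₁ : Cc' ⟶ E₁} {q₁ : E₁ ⟶ B'} (hτ₁ : P.weq τ₁) (hq₁ : P.fib q₁)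
    (hfac₁ : τ₁ ≫ q₁ = g') {P₁ : C} {f₁ : P₁ ⟶ E₁} {pb₁ : P₁ ⟶ A'}
    (hP₁ : IsPullback f₁ pb₁ q₁ h') :
    ∃ (J' : C) (j' : J' ⟶ B') (δ : J ⟶ J'),
      P.IsPushoutJoin h' q₁ f₁ pb₁ j' ∧ P.weq δ ∧ j ≫ β = δ ≫ j' := by
  obtain ⟨E, τ, q, hτ, hq, hfac, Pj, fb, pb, hPj, hj⟩ := isJoin_iff.1 hj
  obtain ⟨e, he, hqe⟩ :=
    exists_weq_comp_eq_of_fibrantReplacement hc hα hg hτ hfac hτ₁ hq₁ hfac₁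
  let u : Pj ⟶ P₁ := hP₁.lift (fb ≫ e) (pb ≫ γ)
    (by rw [Category.assoc, hqe, reassoc_of% hPj.w, hh, Category.assoc])
  have hu : P.weq u := weq_of_isPullback_of_weq hq hq₁ he hβ hγ hqe hh hPj hP₁
    (hP₁.lift_fst _ _ _) (hP₁.lift_snd _ _ _)
  exact hj.exists_weq hP₁.w hu hγ he (hP₁.lift_snd _ _ _) (hP₁.lift_fst _ _ _) hh hqe.symm

lemma IsJoin.exists_weq (hc : ∀ X : C, P.CofModel X)
    {A Cc B J A' Cc' B' : C} {h : A ⟶ B} {g : Cc ⟶ B} {j : J ⟶ B} (hj : P.IsJoin h g j)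
    {h' : A' ⟶ B'} {g' : Cc' ⟶ B'} {γ : A ⟶ A'} {α : Cc ⟶ Cc'} {β : B ⟶ B'}
    (hγ : P.weq γ) (hα : P.weq α) (hβ : P.weq β) (hh : h ≫ β = γ ≫ h')
    (hg : g ≫ β = α ≫ g') :
    ∃ (J' : C) (j' : J' ⟶ B') (δ : J ⟶ J'), P.IsJoin h' g' j' ∧ P.weq δ ∧ j ≫ β = δ ≫ j' := by
  obtain ⟨E₁, τ₁, q₁, hτ₁, hq₁, hfac₁⟩ := P.F_fac g'
  obtain ⟨P₁, f₁, pb₁, hP₁, -⟩ := P.pb_exists q₁ h' hq₁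
  obtain ⟨J', j', δ, hj', hδ, hjδ⟩ :=
    hj.exists_isPushoutJoin_weq hc hγ hα hβ hh hg hτ₁ hq₁ hfac₁ hP₁
  exact ⟨J', j', δ, isJoin_iff.2 ⟨E₁, τ₁, q₁, hτ₁, hq₁, hfac₁, P₁, f₁, pb₁, hP₁, hj'⟩, hδ, hjδ⟩

lemma IsJoin.weaklyEquivOver (hc : ∀ X : C, P.CofModel X) {A Cc B J J' : C} {f : A ⟶ B}
    {g : Cc ⟶ B} {j : J ⟶ B} {j' : J' ⟶ B} (hj : P.IsJoin f g j) (hj' : P.IsJoin f g j') :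
    P.WeaklyEquivOver (Over.mk j) (Over.mk j') := by
  obtain ⟨E, τ, q, hτ, hq, hfac, Pj, fb, pb, hPj, hj'⟩ := isJoin_iff.1 hj'
  obtain ⟨J₂, j₂, δ, hj₂, hδ, hjδ⟩ := hj.exists_isPushoutJoin_weq hc (P.weq_id A)
    (P.weq_id Cc) (P.weq_id B) (by simp) (by simp) hτ hq hfac hPj
  exact (weaklyEquivOver_of_weq hδ (by rw [← hjδ, Category.comp_id])).trans
    (hj₂.weaklyEquivOver hPj.w hj')

lemma IsJoin.weaklyEquivOver_of_weaklyEquivOver (hc : ∀ X : C, P.CofModel X) {B Cc : C}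
    {g : Cc ⟶ B} {u v : Over B} (huv : P.WeaklyEquivOver u v) {J J' : C} {j : J ⟶ B}
    {j' : J' ⟶ B} (hj : P.IsJoin u.hom g j) (hj' : P.IsJoin v.hom g j') :
    P.WeaklyEquivOver (Over.mk j) (Over.mk j') := by
  induction huv generalizing J J' with
  | rel u v huv =>
    obtain ⟨e, he⟩ := huv
    obtain ⟨J₂, j₂, δ, hj₂, hδ, hjδ⟩ :=
      hj.exists_weq hc (h' := v.hom) (g' := g) he (P.weq_id Cc) (P.weq_id B) (by simp)
        (by simp)
    exact (weaklyEquivOver_of_weq hδ (by rw [← hjδ, Category.comp_id])).trans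
      (hj₂.weaklyEquivOver hc hj')
  | refl => exact hj.weaklyEquivOver hc hj'
  | symm _ _ _ ih => exact (ih hj' hj).symm
  | trans _ v _ _ _ ih₁ ih₂ =>
    obtain ⟨Jv, jv, hjv⟩ := P.exists_isJoin v.hom g
    exact (ih₁ hj hjv).trans (ih₂ hjv hj')

lemma exists_isIterJoin (P : PreJCat C) {E B : C} (g : E ⟶ B) :
    ∀ n : ℕ, ∃ (X : C) (h : X ⟶ B), P.IsIterJoin g n h
  | 0 => ⟨E, g, .zero⟩
  | n + 1 =>
    let ⟨_, h, hit⟩ := P.exists_isIterJoin g n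
    let ⟨_, j, hj⟩ := P.exists_isJoin h g
    ⟨_, j, hit.succ hj⟩

lemma IsIterJoin.exists_weq (hc : ∀ X : C, P.CofModel X) {E B E' B' : C} {g : E ⟶ B}
    {g' : E' ⟶ B'} {α : E ⟶ E'} {β : B ⟶ B'} (hα : P.weq α) (hβ : P.weq β)
    (hg : g ≫ β = α ≫ g') {n : ℕ} {X : C} {h : X ⟶ B} (hit : P.IsIterJoin g n h) :
    ∃ (Y : C) (h' : Y ⟶ B') (γ : X ⟶ Y), P.IsIterJoin g' n h' ∧ P.weq γ ∧ h ≫ β = γ ≫ h' := by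
  induction hit with
  | zero => exact ⟨E', g', α, .zero, hα, hg⟩
  | succ _ hj ih =>
    obtain ⟨Y, h', γ, hit', hγ, hh⟩ := ih
    obtain ⟨J', j', δ, hj', hδ, hjδ⟩ := hj.exists_weq hc hγ hα hβ hh hg
    exact ⟨J', j', δ, hit'.succ hj', hδ, hjδ⟩

lemma IsIterJoin.weaklyEquivOver (hc : ∀ X : C, P.CofModel X) {E B : C} {g : E ⟶ B} {n : ℕ}
    {X X' : C} {h : X ⟶ B} {h' : X' ⟶ B} (hit : P.IsIterJoin g n h)
    (hit' : P.IsIterJoin g n h') : P.WeaklyEquivOver (Over.mk h) (Over.mk h') := by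
  induction hit generalizing X' with
  | zero =>
    cases hit'
    exact .refl _
  | succ _ hj ih =>
    cases hit' with
    | succ hprev' hj' => exact IsJoin.weaklyEquivOver_of_weaklyEquivOver hc (ih hprev') hj hj'

lemma exists_isIterJoin_hasWeakSection_iff (hc : ∀ X : C, P.CofModel X) {E B : C}
    {g : E ⟶ B} {n : ℕ} {X : C} {h : X ⟶ B} (hit : P.IsIterJoin g n h) :
    (∃ (X' : C) (h' : X' ⟶ B), P.IsIterJoin g n h' ∧ P.HasWeakSection h') ↔
      P.HasWeakSection h :=
  ⟨fun ⟨_, _, hit', hws⟩ =>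
    (hasWeakSection_iff_of_weaklyEquivOver hc (hit'.weaklyEquivOver hc hit)).1 hws,
    fun hws => ⟨X, h, hit, hws⟩⟩

lemma gsecat_eq_of_weq (hc : ∀ X : C, P.CofModel X) {E B E' B' : C} {g : E ⟶ B}
    {g' : E' ⟶ B'} {α : E ⟶ E'} {β : B ⟶ B'} (hα : P.weq α) (hβ : P.weq β)
    (hg : g ≫ β = α ≫ g') : P.Gsecat g = P.Gsecat g' := by
  unfold Gsecat
  congr 1
  ext n
  refine exists_congr fun m => and_congr_right fun _ => ?_
  obtain ⟨X, h, hit⟩ := P.exists_isIterJoin g m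
  obtain ⟨Y, h', γ, hit', hγ, hh⟩ := hit.exists_weq hc hα hβ hg
  rw [exists_isIterJoin_hasWeakSection_iff hc hit, exists_isIterJoin_hasWeakSection_iff hc hit']
  exact hasWeakSection_iff_of_weq hc hγ hβ hh

lemma gsecat_eq_of_weaklyEquivMor (hc : ∀ X : C, P.CofModel X) {u v : Arrow C}
    (huv : P.WeaklyEquivMor u v) : P.Gsecat u.hom = P.Gsecat v.hom := by
  induction huv with
  | rel u v huv =>
    obtain ⟨φ, hl, hr⟩ := huv
    exact gsecat_eq_of_weq hc hl hr (Arrow.w φ).symm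
  | refl => rfl
  | symm _ _ _ ih => exact ih.symm
  | trans _ _ _ _ _ ih₁ ih₂ => exact ih₁.trans ih₂

lemma isHPB_of_isPullback {E B A Pt : C} {q : E ⟶ B} {f : A ⟶ B} {fb : Pt ⟶ E}
    {pb : Pt ⟶ A} (hq : P.fib q) (h : IsPullback fb pb q f) : P.IsHPB fb pb q f :=
  ⟨h.w, E, 𝟙 E, q, P.weq_id E, hq, Category.id_comp q, Pt, fb, pb, h, 𝟙 Pt, P.weq_id Pt,
    by simp, Category.id_comp pb⟩

lemma isHPO_of_isPushout {A Z Y Q : C} {i : A ⟶ Z} {g : A ⟶ Y} {inl : Z ⟶ Q} {inr : Y ⟶ Q}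
    (hi : P.cofib i) (h : IsPushout i g inl inr) : P.IsHPO i g inl inr :=
  ⟨h.w, Z, i, 𝟙 Z, hi, P.weq_id Z, Category.comp_id i, Q, inl, inr, h, 𝟙 Q, P.weq_id Q,
    by simp, Category.comp_id inr⟩

end PreJCat

namespace ModelizationFunctor

open PreJCat

variable {D : Type u'} [Category.{v'} D] [HasZeroObject D] [HasZeroMorphisms D]
  {P : PreJCat C} {Q : PreJCat D} (μ : ModelizationFunctor P Q)

lemma hasWeakSection_map {X B : C} {h : X ⟶ B} (hws : P.HasWeakSection h) :
    Q.HasWeakSection (μ.F.map h) := by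
  obtain ⟨E, τ, q, hτ, hq, hfac, s, hs⟩ := hws
  obtain ⟨E₂, τ₂, q₂, hτ₂, hq₂, hfac₂⟩ := Q.F_fac (μ.F.map q)
  refine ⟨E₂, μ.F.map τ ≫ τ₂, q₂, Q.weq_comp (μ.map_weq τ hτ) hτ₂, hq₂, ?_,
    μ.F.map s ≫ τ₂, ?_⟩
  · rw [Category.assoc, hfac₂, ← Functor.map_comp, hfac]
  · rw [Category.assoc, hfac₂, ← Functor.map_comp, hs, CategoryTheory.Functor.map_id]

lemma exists_isJoin_map {A Cc B J : C} {f : A ⟶ B} {g : Cc ⟶ B} {j : J ⟶ B}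
    (hj : P.IsJoin f g j) : ∃ (J' : D) (j' : J' ⟶ μ.F.obj B),
      Q.IsJoin (μ.F.map f) (μ.F.map g) j' ∧
        Q.WeaklyEquivOver (Over.mk (μ.F.map j)) (Over.mk j') := by
  obtain ⟨E, τ, q, hτ, hq, hfac, E', fbar, pbar, hE', Z, i, σ, a, bz, hi, hσ, hiσ, hJ, haj,
    hbzj⟩ := isJoin_iff.1 hj
  obtain ⟨-, E₂, τ₂, q₂, hτ₂, hq₂, hfac₂, Pt, pr₁, pr₂, hPt, w, hw, hw₁, hw₂⟩ :=
    μ.map_hpb (isHPB_of_isPullback hq hE')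
  obtain ⟨-, Z₃, i₃, σ₃, hi₃, hσ₃, hiσ₃, J₃, inl₃, inr₃, hJ₃, w₃, hw₃, hinl₃, hinr₃⟩ :=
    μ.map_hpo (isHPO_of_isPushout hi hJ.flip)
  -- Through `w₃`, `μ.F.map j` is a pushout join of the image square; it is then transported
  -- along `w` to the strict pullback `Pt` of the fibrant replacement `q₂`.
  have hj₃ : Q.IsPushoutJoin (μ.F.map f) (μ.F.map q) (μ.F.map fbar) (μ.F.map pbar)
      (w₃ ≫ μ.F.map j) :=
    ⟨Z₃, i₃, σ₃ ≫ μ.F.map σ, inr₃, inl₃, hi₃, Q.weq_comp hσ₃ (μ.map_weq σ hσ),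
      by rw [reassoc_of% hiσ₃, ← Functor.map_comp, hiσ], hJ₃.flip,
      by rw [reassoc_of% hinr₃, ← Functor.map_comp, haj],
      by rw [reassoc_of% hinl₃, ← Functor.map_comp, hbzj, Functor.map_comp, Category.assoc]⟩
  obtain ⟨J', j', δ, hj', hδ, hjδ⟩ := hj₃.exists_weq (β := 𝟙 _) hPt.w hw (Q.weq_id _) hτ₂
    (by rw [hw₂, Category.comp_id]) hw₁ (by simp) (by rw [Category.comp_id, hfac₂])
  refine ⟨J', j', isJoin_iff.2 ⟨E₂, μ.F.map τ ≫ τ₂, q₂, Q.weq_comp (μ.map_weq τ hτ) hτ₂, hq₂,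
    by rw [Category.assoc, hfac₂, ← Functor.map_comp, hfac], Pt, pr₁, pr₂, hPt, hj'⟩, ?_⟩
  exact (weaklyEquivOver_of_weq hw₃ rfl).symm.trans
    (weaklyEquivOver_of_weq hδ (by rw [← hjδ, Category.comp_id]))

lemma exists_isIterJoin_map (hd : ∀ X : D, Q.CofModel X) {E B : C} {g : E ⟶ B} {n : ℕ}
    {X : C} {h : X ⟶ B} (hit : P.IsIterJoin g n h) :
    ∃ (Y : D) (H : Y ⟶ μ.F.obj B), Q.IsIterJoin (μ.F.map g) n H ∧
      Q.WeaklyEquivOver (Over.mk (μ.F.map h)) (Over.mk H) := by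
  induction hit with
  | zero => exact ⟨_, _, .zero, .refl _⟩
  | succ _ hj ih =>
    obtain ⟨Y, H, hit, hrel⟩ := ih
    obtain ⟨J', j', hj', hrel'⟩ := μ.exists_isJoin_map hj
    obtain ⟨J'', j'', hj''⟩ := Q.exists_isJoin H (μ.F.map g)
    exact ⟨J'', j'', hit.succ hj'',
      hrel'.trans (IsJoin.weaklyEquivOver_of_weaklyEquivOver hd hrel hj' hj'')⟩

lemma gsecat_map_le (hd : ∀ X : D, Q.CofModel X) {E B : C} (g : E ⟶ B) :
    Q.Gsecat (μ.F.map g) ≤ P.Gsecat g := by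
  refine sInf_le_sInf ?_
  rintro _ ⟨m, rfl, X, h, hit, hws⟩
  obtain ⟨Y, H, hit', hrel⟩ := μ.exists_isIterJoin_map hd hit
  exact ⟨m, rfl, Y, H, hit',
    (hasWeakSection_iff_of_weaklyEquivOver hd hrel).1 (μ.hasWeakSection_map hws)⟩

end ModelizationFunctor

/-- For modelization functors `μ : C → D` and `ν : D → C` between
J-categories with `ν(μ(p))` weakly equivalent to `p`, `secat (μ p) = secat p`. -/
theorem Gsecat_map_eq {D : Type u'} [Category.{v'} D] [HasZeroObject D]
    [HasZeroMorphisms D]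
    (J : JCat C) (K : JCat D)
    (hc : ∀ X : C, J.toPreJCat.CofModel X)
    (hd : ∀ X : D, K.toPreJCat.CofModel X)
    (μ : ModelizationFunctor J.toPreJCat K.toPreJCat)
    (ν : ModelizationFunctor K.toPreJCat J.toPreJCat)
    {E B : C} (p : E ⟶ B)
    (h : J.toPreJCat.WeaklyEquivMor (Arrow.mk (ν.F.map (μ.F.map p))) (Arrow.mk p)) :
    K.toPreJCat.Gsecat (μ.F.map p) = J.toPreJCat.Gsecat p := by
  refine le_antisymm (μ.gsecat_map_le hd p) ?_
  calc J.toPreJCat.Gsecat p = J.toPreJCat.Gsecat (ν.F.map (μ.F.map p)) :=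
        (PreJCat.gsecat_eq_of_weaklyEquivMor hc h).symm
    _ ≤ K.toPreJCat.Gsecat (μ.F.map p) := ν.gsecat_map_le hc _
end

section
/- In a J-category, transitivity of weak liftings holds: given morphisms f : A → B, g : C → B, h : D → B, if f admits a weak lifting along g and g admits a weak lifting along h, then f admits a weak lifting along h. -/
/-!
Factor `g = τ ≫ q` and `h = τ' ≫ q'`, with `s ≫ q = f` and `t ≫ q' = g`. Pulling `q'` back along
`q` and F-factorizing the induced map `Cc ⟶ E ×_B E'` produces a trivial fibration `p : N ⟶ E`
together with `k : N ⟶ E'` over `B`. Since `A` is a cofibrant model, `s` lifts through `p`, and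
composing the lift with `k` lifts `f` through `q'`.
-/

open CategoryTheory CategoryTheory.Limits ZeroObject

universe v u v' u'

variable (C : Type u) [Category.{v} C] [HasZeroObject C] [HasZeroMorphisms C]

variable {C}

variable (C)

variable {C}

namespace PreJCat

variable {𝒞 : Type*} [Category 𝒞]

theorem CofModel.exists_lift_of_trivialFib {P : PreJCat 𝒞} {A X Y : 𝒞} (hA : P.CofModel A)
    {p : X ⟶ Y} (hp : P.fib p) (hpw : P.weq p) (s : A ⟶ Y) : ∃ s' : A ⟶ X, s' ≫ p = s := by
  obtain ⟨Q, fst, snd, hQ, hsnd⟩ := P.pb_exists p s hp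
  obtain ⟨σ, hσ⟩ := hA snd hsnd ((P.pb_weq hp hQ).2 hpw)
  exact ⟨σ ≫ fst, by rw [Category.assoc, hQ.w, ← Category.assoc, hσ, Category.id_comp]⟩

theorem exists_trivialFib_map_of_weq (P : PreJCat 𝒞) {Cc E E' B : 𝒞} {q : E ⟶ B} {q' : E' ⟶ B}
    (hq' : P.fib q') {τ : Cc ⟶ E} (hτ : P.weq τ) {t : Cc ⟶ E'} (hw : t ≫ q' = τ ≫ q) :
    ∃ (N : 𝒞) (p : N ⟶ E) (k : N ⟶ E'), P.fib p ∧ P.weq p ∧ k ≫ q' = p ≫ q := by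
  obtain ⟨Q, fst, snd, hQ, hsnd⟩ := P.pb_exists q' q hq'
  obtain ⟨N, ω, m, hω, hm, hωm⟩ := P.F_fac (hQ.lift t τ hw)
  have hmsnd : P.weq (m ≫ snd) :=
    P.weq_of_comp_right hω (by rwa [← Category.assoc, hωm, hQ.lift_snd])
  exact ⟨N, m ≫ snd, m ≫ fst, P.fib_comp hm hsnd, hmsnd, by simp [hQ.w]⟩

end PreJCat

open PreJCat

/-- In a J-category, transitivity of weak liftings holds. -/
theorem weakLifting_trans (J : JCat C)
    (hc : ∀ X : C, J.toPreJCat.CofModel X)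
    {A B Cc Dd : C} (f : A ⟶ B) (g : Cc ⟶ B) (h : Dd ⟶ B)
    (hfg : J.toPreJCat.WeakLifting f g) (hgh : J.toPreJCat.WeakLifting g h) :
    J.toPreJCat.WeakLifting f h := by
  obtain ⟨E, τ, q, hτ, -, rfl, s, rfl⟩ := hfg
  obtain ⟨E', τ', q', hτ', hq', hτ'q', t, ht⟩ := hgh
  obtain ⟨N, p, k, hp, hpw, hk⟩ := J.exists_trivialFib_map_of_weq hq' hτ ht
  obtain ⟨s', rfl⟩ := CofModel.exists_lift_of_trivialFib (hc A) hp hpw s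
  exact ⟨E', τ', q', hτ', hq', hτ'q', s' ≫ k, by rw [Category.assoc, hk, Category.assoc]⟩
end
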